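/- arXiv:2409.09769 — 2 statements merged into one kernel-verified Lean document; each statement's English description precedes it below -/
import Mathlib

section
/- If F is absorbing (once entered, the chain stays in F forever), then the probability of ever reaching F equals lim_{γ→1⁻} (1-γ) Σ_{s∈F} β_γ(s), where β_γ is the discounted occupation measure with discount γ. -/
open MeasureTheory Filter
open scoped ENNReal Topology

/-!
Since `F` is absorbing and the rows of `P` sum to one, a transition out of `F` has probability
zero, so the events `{s_t ∈ F}` increase almost surely and `p_t = P(s_t ∈ F)` increases to the
probability of ever reaching `F`. Summing the occupation measure over `F` gives
`∑_{s∈F} β_γ(s) = ∑ₜ γ^t p_t`, and `(1 - γ) ∑ₜ γ^t p_t → lim p_t` as `γ → 1⁻` by Abel's theorem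
applied to the increments of `p`.
-/

open Finset

theorem measure_eq_zero_of_fiber_eq_zero {α ι : Type*} [MeasurableSpace α] [Countable ι]
    {μ : Measure α} (f : α → ι) {E : Set α} (h : ∀ x ∈ E, μ (f ⁻¹' {f x}) = 0) : μ E = 0 := by
  have hE : E ⊆ ⋃ i ∈ f '' E, f ⁻¹' {i} := fun x hx =>
    Set.mem_biUnion (Set.mem_image_of_mem f hx) rfl
  refine measure_mono_null hE ((measure_biUnion_null_iff (Set.to_countable _)).2 ?_)
  rintro _ ⟨x, hx, rfl⟩
  exact h x hx

theorem tendsto_measure_iUnion_of_ae_le_succ {α : Type*} [MeasurableSpace α] {μ : Measure α}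
    {A : ℕ → Set α} (hA : ∀ n, A n ≤ᵐ[μ] A (n + 1)) :
    Tendsto (fun n => μ (A n)) atTop (𝓝 (μ (⋃ n, A n))) := by
  set N := ⋃ n, A n \ A (n + 1)
  have hN : μ N = 0 := measure_iUnion_null fun n => ae_le_set.1 (hA n)
  have hmono : Monotone fun n => A n \ N := by
    refine monotone_nat_of_le_succ fun n ω ⟨hω, hωN⟩ => ⟨?_, hωN⟩
    by_contra h
    exact hωN (Set.mem_iUnion.2 ⟨n, hω, h⟩)
  simpa only [Function.comp_def, measure_sdiff_null hN, ← Set.iUnion_sdiff] using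
    tendsto_measure_iUnion_atTop (μ := μ) hmono

theorem Finset.apply_eq_zero_of_sum_eq_one {S : Type*} [Fintype S] {w : S → ℝ≥0∞}
    {F : Finset S} (hw : ∑ s, w s = 1) (hF : ∑ s ∈ F, w s = 1) {b : S} (hb : b ∉ F) :
    w b = 0 := by
  classical
  have h : w b + 1 ≤ 0 + 1 := calc
    w b + 1 = ∑ s ∈ insert b F, w s := by rw [sum_insert hb, hF]
    _ ≤ ∑ s, w s := sum_le_sum_of_subset (subset_univ _)
    _ = 0 + 1 := by rw [hw, zero_add]
  exact nonpos_iff_eq_zero.1 (ENNReal.le_of_add_le_add_right ENNReal.one_ne_top h)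

theorem Real.summable_mul_pow_of_tendsto {f : ℕ → ℝ} {l : ℝ} (hf : Tendsto f atTop (𝓝 l))
    {x : ℝ} (hx : |x| < 1) : Summable fun n => f n * x ^ n := by
  obtain ⟨C, hC⟩ := (Metric.isBounded_range_of_tendsto f hf).exists_norm_le
  refine .of_norm_bounded ((summable_geometric_of_lt_one (abs_nonneg x) hx).mul_left C) fun n => ?_
  rw [norm_mul, norm_pow, Real.norm_eq_abs]
  exact mul_le_mul_of_nonneg_right (hC _ ⟨n, rfl⟩) (by positivity)

theorem Real.tendsto_one_sub_mul_tsum_pow_nhdsWithin_lt {f : ℕ → ℝ} {l : ℝ}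
    (hf : Tendsto f atTop (𝓝 l)) :
    Tendsto (fun x => (1 - x) * ∑' n, f n * x ^ n) (𝓝[<] 1) (𝓝 l) := by
  let g : ℕ → ℝ := fun | 0 => f 0 | n + 1 => f (n + 1) - f n
  have hg : ∀ n, ∑ i ∈ range (n + 1), g i = f n := by
    intro n
    induction n with
    | zero => simp [g]
    | succ n ih => rw [sum_range_succ, ih]; simp [g]
  have habel := Real.tendsto_tsum_powerSeries_nhdsWithin_lt (f := g)
    ((tendsto_add_atTop_iff_nat 1).1 (hf.congr fun n => (hg n).symm))
  refine habel.congr' ?_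
  filter_upwards [Ioo_mem_nhdsLT (show (-1 : ℝ) < 1 by norm_num)] with x hx
  have hS := (Real.summable_mul_pow_of_tendsto hf (abs_lt.2 hx)).hasSum
  set S := ∑' n, f n * x ^ n
  have hshift : HasSum (fun n => g (n + 1) * x ^ (n + 1)) ((S - f 0) - x * S) := by
    have htail : HasSum (fun n => f (n + 1) * x ^ (n + 1)) (S - f 0) := by
      simpa using (hasSum_nat_add_iff' 1).2 hS
    have hterm : (fun n => g (n + 1) * x ^ (n + 1)) =
        fun n => f (n + 1) * x ^ (n + 1) - x * (f n * x ^ n) := by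
      funext n
      simp only [g]
      ring
    rw [hterm]
    exact htail.sub (hS.mul_left x)
  have hgS : Summable fun n => g n * x ^ n := (summable_nat_add_iff 1).1 hshift.summable
  rw [hgS.tsum_eq_zero_add, hshift.tsum_eq]
  simp only [g, pow_zero, mul_one]
  ring

section MarkovChain

variable {S : Type*} [MeasurableSpace S]

def IsMarkovChain (μ : Measure (ℕ → S)) (ρ : S → ℝ≥0∞) (P : S → S → ℝ≥0∞) : Prop :=
  ∀ (n : ℕ) (path : ℕ → S),
    μ {ω | ∀ i ≤ n, ω i = path i} = ρ (path 0) * ∏ i ∈ range n, P (path i) (path (i + 1))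

variable {μ : Measure (ℕ → S)} {ρ : S → ℝ≥0∞} {P : S → S → ℝ≥0∞}

theorem IsMarkovChain.measure_eq_zero_of_transition_eq_zero [Finite S]
    (hμ : IsMarkovChain μ ρ P) {t : ℕ} {E : Set (ℕ → S)}
    (hE : ∀ ω ∈ E, P (ω t) (ω (t + 1)) = 0) : μ E = 0 := by
  -- The fiber of `ω` under restriction to times `≤ t + 1` is the cylinder through `ω`, whose
  -- probability contains the factor `P (ω t) (ω (t + 1)) = 0`.
  refine measure_eq_zero_of_fiber_eq_zero (fun ω (i : Fin (t + 2)) => ω i) fun ω hω => ?_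
  have hcyl : (fun (ω' : ℕ → S) (i : Fin (t + 2)) => ω' i) ⁻¹' {fun (i : Fin (t + 2)) => ω i} =
      {ω' | ∀ i ≤ t + 1, ω' i = ω i} := by
    ext ω'
    simp [funext_iff, Fin.forall_iff, Nat.lt_succ_iff]
  rw [hcyl, hμ, prod_eq_zero (mem_range.2 (Nat.lt_succ_self t)) (hE ω hω), mul_zero]

theorem IsMarkovChain.ae_mem_succ_of_mem [Finite S] (hμ : IsMarkovChain μ ρ P) {F : Set S}
    (hF : ∀ s ∈ F, ∀ s' ∉ F, P s s' = 0) (t : ℕ) :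
    {ω : ℕ → S | ω t ∈ F} ≤ᵐ[μ] {ω | ω (t + 1) ∈ F} :=
  ae_le_set.2 <| hμ.measure_eq_zero_of_transition_eq_zero fun _ hω => hF _ hω.1 _ hω.2

end MarkovChain

theorem Finset.sum_tsum_pow_mul_measure_eval_eq {S : Type*} [MeasurableSpace S]
    [MeasurableSingletonClass S] {μ : Measure (ℕ → S)} [IsFiniteMeasure μ] (F : Finset S)
    {γ : ℝ} (hγ0 : 0 ≤ γ) (hγ1 : γ < 1) :
    ∑ s ∈ F, ∑' t : ℕ, γ ^ t * (μ {ω | ω t = s}).toReal =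
      ∑' t : ℕ, (μ {ω | ω t ∈ F}).toReal * γ ^ t := by
  have hsummable : ∀ s, Summable fun t : ℕ => γ ^ t * (μ {ω | ω t = s}).toReal := fun s =>
    .of_nonneg_of_le (fun t => by positivity)
      (fun t => mul_le_mul_of_nonneg_left (measureReal_mono (Set.subset_univ _)) (by positivity))
      ((summable_geometric_of_lt_one hγ0 hγ1).mul_right (μ.real Set.univ))
  rw [← Summable.tsum_finsetSum fun s _ => hsummable s]
  refine tsum_congr fun t => ?_
  rw [← mul_sum, ← ENNReal.toReal_sum fun _ _ => measure_ne_top _ _, mul_comm]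
  congr
  exact sum_measure_preimage_singleton F fun s _ =>
    measurable_pi_apply t (measurableSet_singleton s)

theorem reach_probability_as_abel_limit_general
    {S : Type*} [Fintype S] [MeasurableSpace S] [MeasurableSingletonClass S]
    (P : S → S → ℝ≥0∞) (ρ : S → ℝ≥0∞)
    (hP1 : ∀ s, ∑ s', P s s' = 1)
    (F : Finset S) (habs : ∀ s ∈ F, ∑ s' ∈ F, P s s' = 1)
    (μ : Measure (ℕ → S)) [IsProbabilityMeasure μ]
    (hcyl : ∀ (n : ℕ) (path : ℕ → S),
      μ {ω | ∀ i ≤ n, ω i = path i} =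
        ρ (path 0) * ∏ i ∈ Finset.range n, P (path i) (path (i + 1)))
    (β : ℝ → S → ℝ)
    (hβ : ∀ γ s, β γ s = ∑' t : ℕ, γ ^ t * (μ {ω | ω t = s}).toReal) :
    Tendsto (fun γ : ℝ => (1 - γ) * ∑ s ∈ F, β γ s) (𝓝[<] 1)
      (𝓝 ((μ {ω | ∃ t, ω t ∈ F}).toReal)) := by
  have hμ : IsMarkovChain μ ρ P := hcyl
  have hclosed : ∀ s ∈ (F : Set S), ∀ s' ∉ (F : Set S), P s s' = 0 := fun s hs _ hs' =>
    Finset.apply_eq_zero_of_sum_eq_one (hP1 s) (habs s hs) hs'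
  have hreach : Tendsto (fun t => (μ {ω | ω t ∈ F}).toReal) atTop
      (𝓝 (μ {ω | ∃ t, ω t ∈ F}).toReal) := by
    rw [Set.ofPred_exists]
    exact (ENNReal.tendsto_toReal (measure_ne_top _ _)).comp
      (tendsto_measure_iUnion_of_ae_le_succ (hμ.ae_mem_succ_of_mem hclosed))
  refine (Real.tendsto_one_sub_mul_tsum_pow_nhdsWithin_lt hreach).congr' ?_
  filter_upwards [Ioo_mem_nhdsLT zero_lt_one] with γ hγ
  simp only [hβ, F.sum_tsum_pow_mul_measure_eval_eq hγ.1.le hγ.2]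

/-- If `F` is absorbing (`P(s,F) = 1` for all `s ∈ F`), then the probability
of ever reaching `F` equals `lim_{γ→1⁻} (1-γ) ∑_{s∈F} β_γ(s)`, where
`β_γ(s) = ∑' t, γ^t P_ρ(s_t = s)` is the discounted occupation measure. -/
theorem reach_probability_as_abel_limit
    {S : Type*} [Fintype S] [MeasurableSpace S] [MeasurableSingletonClass S]
    (P : S → S → ℝ≥0∞) (ρ : S → ℝ≥0∞)
    (hρ1 : ∑ s, ρ s = 1) (hP1 : ∀ s, ∑ s', P s s' = 1)
    (F : Finset S) (habs : ∀ s ∈ F, ∑ s' ∈ F, P s s' = 1)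
    (μ : Measure (ℕ → S)) [IsProbabilityMeasure μ]
    (hcyl : ∀ (n : ℕ) (path : ℕ → S),
      μ {ω | ∀ i ≤ n, ω i = path i} =
        ρ (path 0) * ∏ i ∈ Finset.range n, P (path i) (path (i + 1)))
    (β : ℝ → S → ℝ)
    (hβ : ∀ γ s, β γ s = ∑' t : ℕ, γ ^ t * (μ {ω | ω t = s}).toReal) :
    Tendsto (fun γ : ℝ => (1 - γ) * ∑ s ∈ F, β γ s) (𝓝[<] 1)
      (𝓝 ((μ {ω | ∃ t, ω t ∈ F}).toReal)) :=
  reach_probability_as_abel_limit_general P ρ hP1 F habs μ hcyl β hβ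
end

section
/- Feasibility of the discounted LP implies the risk bound: if β : S × A → ℝ_{≥0} satisfies the discounted balance equations Σ_{a'} β(s',a') = ρ(s') + γ Σ_{s,a} P(s,a,s') β(s,a) for all s', and Σ_{s,a} c(s) β(s,a) ≤ r_th with c ≥ 0, then the stationary policy π(a|s) = β(s,a)/Σ_{a'} β(s,a') induces a Markov chain whose discounted expected cost E_π[Σ_t γ^t c(s_t)] equals Σ_{s,a} c(s) β(s,a) and hence is at most r_th. -/
/-!
Write `b s = ∑ a, β s a` and `M = policyKernel P π` for the transition matrix of the chain
induced by `π`. The balance equations say `b = ρ + γ • (b ᵥ* M)`: where `b s > 0` the row `π s`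
is `β s` normalised, and where `b s = 0` the row `π s` is arbitrary but `β s = 0`.
A row-stochastic `M` is nonexpansive in the sup norm, so the value function
`V = ∑ₜ γᵗ • (Mᵗ *ᵥ c)` converges and satisfies `V = c + γ • (M *ᵥ V)`. Hence the discounted
cost is `ρ ⬝ᵥ V = (b - γ • (b ᵥ* M)) ⬝ᵥ V = b ⬝ᵥ (V - γ • (M *ᵥ V)) = b ⬝ᵥ c`.
-/

open Finset Matrix

section HasSum

variable {ι m n R : Type*} [Fintype n]
  [NonUnitalNonAssocSemiring R] [TopologicalSpace R] [IsTopologicalSemiring R]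

theorem HasSum.dotProduct {f : ι → n → R} {a : n → R} (hf : HasSum f a) (v : n → R) :
    HasSum (fun i => v ⬝ᵥ f i) (v ⬝ᵥ a) :=
  hasSum_sum fun j _ => (Pi.hasSum.1 hf j).mul_left (v j)

theorem HasSum.mulVec {f : ι → n → R} {a : n → R} (hf : HasSum f a) (M : Matrix m n R) :
    HasSum (fun i => M *ᵥ f i) (M *ᵥ a) :=
  Pi.hasSum.2 fun j => hf.dotProduct (M j)

end HasSum

namespace Matrix

variable {n : Type*} [Fintype n] [DecidableEq n] {M : Matrix n n ℝ} {γ : ℝ}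

theorem norm_mulVec_le_of_mem_rowStochastic (hM : M ∈ rowStochastic ℝ n) (v : n → ℝ) :
    ‖M *ᵥ v‖ ≤ ‖v‖ := by
  refine (pi_norm_le_iff_of_nonneg (norm_nonneg v)).2 fun i => ?_
  calc ‖∑ j, M i j * v j‖
      ≤ ∑ j, M i j * ‖v‖ := by
        refine (norm_sum_le _ _).trans (sum_le_sum fun j _ => ?_)
        rw [norm_mul, Real.norm_of_nonneg (nonneg_of_mem_rowStochastic hM)]
        exact mul_le_mul_of_nonneg_left (norm_le_pi_norm v j) (nonneg_of_mem_rowStochastic hM)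
    _ = ‖v‖ := by rw [← sum_mul, sum_row_of_mem_rowStochastic hM, one_mul]

noncomputable def discountedValue (M : Matrix n n ℝ) (γ : ℝ) (c : n → ℝ) : n → ℝ :=
  ∑' t : ℕ, γ ^ t • (M ^ t *ᵥ c)

theorem hasSum_discountedValue (hM : M ∈ rowStochastic ℝ n) (hγ0 : 0 ≤ γ) (hγ1 : γ < 1)
    (c : n → ℝ) : HasSum (fun t : ℕ => γ ^ t • (M ^ t *ᵥ c)) (discountedValue M γ c) := by
  refine (Summable.of_norm_bounded ((summable_geometric_of_lt_one hγ0 hγ1).mul_right ‖c‖)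
    fun t => ?_).hasSum
  rw [norm_smul, Real.norm_of_nonneg (pow_nonneg hγ0 t)]
  exact mul_le_mul_of_nonneg_left
    (norm_mulVec_le_of_mem_rowStochastic (pow_mem hM t) c) (pow_nonneg hγ0 t)

theorem discountedValue_eq_add_smul_mulVec (hM : M ∈ rowStochastic ℝ n) (hγ0 : 0 ≤ γ)
    (hγ1 : γ < 1) (c : n → ℝ) :
    discountedValue M γ c = c + γ • (M *ᵥ discountedValue M γ c) := by
  have hV := hasSum_discountedValue hM hγ0 hγ1 c
  have hshift : HasSum (fun t : ℕ => γ ^ (t + 1) • (M ^ (t + 1) *ᵥ c))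
      (γ • (M *ᵥ discountedValue M γ c)) := by
    simpa only [mulVec_smul, smul_smul, mulVec_mulVec, ← pow_succ']
      using (hV.mulVec M).const_smul γ
  simpa only [pow_zero, one_smul, one_mulVec] using hV.unique hshift.zero_add

theorem dotProduct_discountedValue_of_balance (hM : M ∈ rowStochastic ℝ n) (hγ0 : 0 ≤ γ)
    (hγ1 : γ < 1) {ρ b : n → ℝ} (hb : b = ρ + γ • (b ᵥ* M)) (c : n → ℝ) :
    ρ ⬝ᵥ discountedValue M γ c = b ⬝ᵥ c := by
  set V := discountedValue M γ c
  have hρ : ρ = b - γ • (b ᵥ* M) := eq_sub_of_add_eq hb.symm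
  have hV : V - γ • (M *ᵥ V) = c :=
    sub_eq_of_eq_add (discountedValue_eq_add_smul_mulVec hM hγ0 hγ1 c)
  calc ρ ⬝ᵥ V = b ⬝ᵥ V - γ * (b ⬝ᵥ (M *ᵥ V)) := by
        rw [hρ, sub_dotProduct, smul_dotProduct, dotProduct_mulVec, smul_eq_mul]
    _ = b ⬝ᵥ c := by rw [← hV, dotProduct_sub, dotProduct_smul, smul_eq_mul]

theorem hasSum_discounted_dotProduct_of_balance (hM : M ∈ rowStochastic ℝ n) (hγ0 : 0 ≤ γ)
    (hγ1 : γ < 1) {ρ b : n → ℝ} (hb : b = ρ + γ • (b ᵥ* M)) (c : n → ℝ) :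
    HasSum (fun t : ℕ => γ ^ t * ((ρ ᵥ* M ^ t) ⬝ᵥ c)) (b ⬝ᵥ c) := by
  rw [← dotProduct_discountedValue_of_balance hM hγ0 hγ1 hb c]
  simpa only [dotProduct_smul, smul_eq_mul, dotProduct_mulVec]
    using (hasSum_discountedValue hM hγ0 hγ1 c).dotProduct ρ

theorem eq_vecMul_pow_of_succ {R : Type*} [Semiring R] {M : Matrix n n R} {p : ℕ → n → R}
    (hp : ∀ t, p (t + 1) = p t ᵥ* M) (t : ℕ) : p t = p 0 ᵥ* M ^ t := by
  induction t with
  | zero => rw [pow_zero, vecMul_one]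
  | succ t ih => rw [hp, ih, vecMul_vecMul, pow_succ]

end Matrix

section InducedChain

variable {S A : Type*} [Fintype A] {P : S → A → S → ℝ} {π β : S → A → ℝ}

def policyKernel (P : S → A → S → ℝ) (π : S → A → ℝ) : Matrix S S ℝ :=
  of fun s s' => ∑ a, π s a * P s a s'

theorem policyKernel_mem_rowStochastic [Fintype S] [DecidableEq S]
    (hP0 : ∀ s a s', 0 ≤ P s a s') (hP1 : ∀ s a, ∑ s', P s a s' = 1)
    (hπ0 : ∀ s a, 0 ≤ π s a) (hπ1 : ∀ s, ∑ a, π s a = 1) :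
    policyKernel P π ∈ rowStochastic ℝ S := by
  refine mem_rowStochastic_iff_sum.2
    ⟨fun s s' => sum_nonneg fun a _ => mul_nonneg (hπ0 s a) (hP0 s a s'), fun s => ?_⟩
  simp only [policyKernel, of_apply]
  rw [sum_comm]
  simp only [← mul_sum, hP1, mul_one, hπ1]

theorem policyKernel_mul_sum (hβ0 : ∀ s a, 0 ≤ β s a)
    (hπ : ∀ s, 0 < ∑ a, β s a → ∀ a, π s a = β s a / ∑ a, β s a) (s s' : S) :
    policyKernel P π s s' * ∑ a, β s a = ∑ a, P s a s' * β s a := by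
  rcases (sum_nonneg fun a _ => hβ0 s a).eq_or_lt with hzero | hpos
  · have hβs := (sum_eq_zero_iff_of_nonneg fun a _ => hβ0 s a).1 hzero.symm
    rw [← hzero, mul_zero]
    exact (sum_eq_zero fun a ha => by rw [hβs a ha, mul_zero]).symm
  · simp only [policyKernel, of_apply, sum_mul]
    refine sum_congr rfl fun a _ => ?_
    rw [hπ s hpos a]
    field_simp

theorem vecMul_policyKernel [Fintype S] (hβ0 : ∀ s a, 0 ≤ β s a)
    (hπ : ∀ s, 0 < ∑ a, β s a → ∀ a, π s a = β s a / ∑ a, β s a) :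
    (fun s => ∑ a, β s a) ᵥ* policyKernel P π = fun s' => ∑ s, ∑ a, P s a s' * β s a := by
  ext s'
  simp only [vecMul, dotProduct, mul_comm (∑ a, β _ a), policyKernel_mul_sum hβ0 hπ]

end InducedChain

theorem lp_feasibility_implies_risk_bound_general
    {S A : Type*} [Fintype S] [Fintype A]
    (P : S → A → S → ℝ) (ρ : S → ℝ) (c : S → ℝ) (γ rth : ℝ)
    (hγ0 : 0 ≤ γ) (hγ1 : γ < 1)
    (hP0 : ∀ s a s', 0 ≤ P s a s') (hP1 : ∀ s a, ∑ s', P s a s' = 1)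
    (β : S → A → ℝ) (hβ0 : ∀ s a, 0 ≤ β s a)
    (hbal : ∀ s', ∑ a', β s' a' = ρ s' + γ * ∑ s, ∑ a, P s a s' * β s a)
    (hrisk : ∑ s, ∑ a, c s * β s a ≤ rth)
    (π : S → A → ℝ)
    (hπ0 : ∀ s a, 0 ≤ π s a) (hπ1 : ∀ s, ∑ a, π s a = 1)
    (hπ : ∀ s, 0 < ∑ a', β s a' → ∀ a, π s a = β s a / ∑ a', β s a')
    (p : ℕ → S → ℝ)
    (hp0 : ∀ s, p 0 s = ρ s)
    (hps : ∀ t s', p (t + 1) s' = ∑ s, p t s * ∑ a, π s a * P s a s') :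
    (∑' t : ℕ, γ ^ t * ∑ s, p t s * c s) = (∑ s, ∑ a, c s * β s a) ∧
      (∑' t : ℕ, γ ^ t * ∑ s, p t s * c s) ≤ rth := by
  classical
  have hbalance : (fun s => ∑ a, β s a) =
      ρ + γ • ((fun s => ∑ a, β s a) ᵥ* policyKernel P π) := by
    rw [vecMul_policyKernel hβ0 hπ]
    exact funext hbal
  have hp : ∀ t, p t = ρ ᵥ* policyKernel P π ^ t := by
    simpa only [← funext hp0] using
      eq_vecMul_pow_of_succ (M := policyKernel P π) fun t => funext (hps t)
  have hcost : HasSum (fun t : ℕ => γ ^ t * (p t ⬝ᵥ c)) ((fun s => ∑ a, β s a) ⬝ᵥ c) := by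
    simpa only [hp] using hasSum_discounted_dotProduct_of_balance
      (policyKernel_mem_rowStochastic hP0 hP1 hπ0 hπ1) hγ0 hγ1 hbalance c
  have hobjective : (fun s => ∑ a, β s a) ⬝ᵥ c = ∑ s, ∑ a, c s * β s a := by
    simp only [dotProduct, mul_comm _ (c _), mul_sum]
  have hvalue : (∑' t : ℕ, γ ^ t * ∑ s, p t s * c s) = ∑ s, ∑ a, c s * β s a :=
    hobjective ▸ hcost.tsum_eq
  exact ⟨hvalue, hvalue ▸ hrisk⟩

/-- Feasibility of the discounted LP implies the risk bound: if
`β : S × A → ℝ≥0` satisfies the discounted balance equations and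
`∑_{s,a} c(s) β(s,a) ≤ r_th` with `c ≥ 0`, then the stationary policy
`π(a|s) = β(s,a)/∑_{a'} β(s,a')` induces a Markov chain (marginals `p`) whose discounted
expected cost equals `∑_{s,a} c(s) β(s,a)` and hence is at most `r_th`.
We assume `∑_{a'} β(s,a') > 0` at every state reachable under the induced chain. -/
theorem lp_feasibility_implies_risk_bound
    {S A : Type*} [Fintype S] [Fintype A]
    (P : S → A → S → ℝ) (ρ : S → ℝ) (c : S → ℝ) (γ rth : ℝ)
    (hγ0 : 0 ≤ γ) (hγ1 : γ < 1)
    (hP0 : ∀ s a s', 0 ≤ P s a s') (hP1 : ∀ s a, ∑ s', P s a s' = 1)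
    (hρ0 : ∀ s, 0 ≤ ρ s) (hρ1 : ∑ s, ρ s = 1)
    (hc : ∀ s, 0 ≤ c s)
    (β : S → A → ℝ) (hβ0 : ∀ s a, 0 ≤ β s a)
    (hbal : ∀ s', ∑ a', β s' a' = ρ s' + γ * ∑ s, ∑ a, P s a s' * β s a)
    (hrisk : ∑ s, ∑ a, c s * β s a ≤ rth)
    (π : S → A → ℝ)
    (hπ0 : ∀ s a, 0 ≤ π s a) (hπ1 : ∀ s, ∑ a, π s a = 1)
    (hπ : ∀ s, 0 < ∑ a', β s a' → ∀ a, π s a = β s a / ∑ a', β s a')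
    (p : ℕ → S → ℝ)
    (hp0 : ∀ s, p 0 s = ρ s)
    (hps : ∀ t s', p (t + 1) s' = ∑ s, p t s * ∑ a, π s a * P s a s')
    (hreach : ∀ s, (∃ t, 0 < p t s) → 0 < ∑ a', β s a') :
    (∑' t : ℕ, γ ^ t * ∑ s, p t s * c s) = (∑ s, ∑ a, c s * β s a) ∧
      (∑' t : ℕ, γ ^ t * ∑ s, p t s * c s) ≤ rth :=
  lp_feasibility_implies_risk_bound_general P ρ c γ rth hγ0 hγ1 hP0 hP1 β hβ0 hbal hrisk π hπ0 hπ1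
    hπ p hp0 hps
end
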